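/- arXiv:1101.2060 — 7 statements merged into one kernel-verified Lean document; each statement's English description precedes it below -/
import Mathlib

section
/- The ratio r = (δ x* − β)/(α x* + β) of the geometric sequence satisfies |r| < 1, where α = 1 + 2a⁺Δt, β = qΔt, δ = 1 + 2a⁻Δt, and x* = (a + √(a² + kq))/k, provided 1 + 2|a|Δt − kqΔt² ≠ 0. -/
theorem homographic_ratio_lt_one (k q a Δt : ℝ) (hk : 0 < k) (hq : 0 ≤ q)
    (h : a ^ 2 + q ^ 2 > 0) (hΔt : 0 < Δt)
    (hcond : 1 + 2 * |a| * Δt - k * q * Δt ^ 2 ≠ 0) :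
    let α := 1 + 2 * max a 0 * Δt
    let β := q * Δt
    let δ := 1 + 2 * max (-a) 0 * Δt
    let xstar := (a + Real.sqrt (a ^ 2 + k * q)) / k
    |(δ * xstar - β) / (α * xstar + β)| < 1 := by
  intro α β δ xstar
  set s : ℝ := Real.sqrt (a ^ 2 + k * q) with hs_def
  have hkq : 0 ≤ a ^ 2 + k * q := by positivity
  have hs2 : s ^ 2 = a ^ 2 + k * q := Real.sq_sqrt hkq
  have hs0 : 0 ≤ s := Real.sqrt_nonneg _
  have hs_ge : |a| ≤ s := by
    rw [hs_def, ← Real.sqrt_sq_eq_abs]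
    exact Real.sqrt_le_sqrt (by nlinarith)
  have hspos : 0 < s := by
    rcases lt_or_eq_of_le hs0 with h' | h'
    · exact h'
    · exfalso
      have ha0 : a = 0 := by
        have := abs_nonneg a
        have : |a| = 0 := le_antisymm (h' ▸ hs_ge) (abs_nonneg a)
        exact abs_eq_zero.mp this
      have hq0 : q = 0 := by nlinarith [hs2]
      rw [ha0, hq0] at h; norm_num at h
  have hmax1 : max a 0 - max (-a) 0 = a := by
    rcases le_total a 0 with ha | ha
    · rw [max_eq_right ha, max_eq_left (by linarith)]; ring
    · rw [max_eq_left ha, max_eq_right (by linarith)]; ring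
  have hmax2 : max a 0 + max (-a) 0 = |a| := by
    rcases le_total a 0 with ha | ha
    · rw [max_eq_right ha, max_eq_left (by linarith), abs_of_nonpos ha]; ring
    · rw [max_eq_left ha, max_eq_right (by linarith), abs_of_nonneg ha]; ring
  by_cases hsa : a + s = 0
  · have hq0 : q = 0 := by nlinarith [hs2]
    have : xstar = 0 := by simp only [xstar]; rw [← hs_def, hsa, zero_div]
    simp [this, β, hq0]
  · have hsa' : 0 < a + s := by
      rcases lt_or_eq_of_le (by linarith [neg_abs_le a] : 0 ≤ a + s) with h' | h'
      · exact h'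
      · exact absurd h'.symm hsa
    set A : ℝ := (1 + 2 * max a 0 * Δt) * (a + s) + k * q * Δt with hA_def
    set B : ℝ := (1 + 2 * max (-a) 0 * Δt) * (a + s) - k * q * Δt with hB_def
    have hAmB : 0 < A - B := by
      have e1 : A - B = 2 * Δt * ((max a 0 - max (-a) 0) * (a + s) + k * q) := by
        rw [hA_def, hB_def]; ring
      rw [hmax1] at e1
      have e2 : a * (a + s) + k * q = s * (s + a) := by nlinarith [hs2]
      rw [e2] at e1
      rw [e1]
      have := mul_pos hspos (by linarith : (0:ℝ) < s + a)
      positivity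
    have hApB : 0 < A + B := by
      have e1 : A + B = (2 + 2 * (max a 0 + max (-a) 0) * Δt) * (a + s) := by
        rw [hA_def, hB_def]; ring
      rw [hmax2] at e1
      rw [e1]
      have h1 : (0:ℝ) < 2 + 2 * |a| * Δt := by positivity
      exact mul_pos h1 hsa'
    have hApos : 0 < A := by linarith
    have hden : α * xstar + β = A / k := by
      simp only [α, β, xstar]; rw [← hs_def, hA_def, eq_div_iff hk.ne']; field_simp
    have hnum : δ * xstar - β = B / k := by
      simp only [δ, β, xstar]; rw [← hs_def, hB_def, eq_div_iff hk.ne']; field_simp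
    rw [hnum, hden]
    have hk' : (k : ℝ) ≠ 0 := ne_of_gt hk
    have : B / k / (A / k) = B / A := by
      field_simp
    rw [this, abs_div, div_lt_one (abs_pos.mpr (ne_of_gt hApos)), abs_of_pos hApos]
    rw [abs_lt]
    constructor <;> linarith
end

section
/- For two initial data d and d' both satisfying d − x* ≥ −1/(kτ) + η and d' − x* ≥ −1/(kτ) + η with 0 < η < 1/(kτ), the exact solutions satisfy |x(t; d) − x(t; d')| ≤ (1/(kτη))² |d − d'| for all t ≥ 0, where x(t; d) = x* + (d − x*)e^{−t/τ}/(1 + kτ(d − x*)(1 − e^{−t/τ})). -/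
theorem continuous_dependence_initial_data (k q a η : ℝ) (hk : 0 < k) (hq : 0 ≤ q)
    (h : a ^ 2 + k * q > 0)
    (xstar τ : ℝ)
    (hxstar : xstar = (a + Real.sqrt (a ^ 2 + k * q)) / k)
    (hτ : τ = 1 / (2 * Real.sqrt (a ^ 2 + k * q)))
    (hη : 0 < η) (hη' : η < 1 / (k * τ))
    (x : ℝ → ℝ → ℝ)
    (hx : ∀ d t, x t d = xstar + (d - xstar) * Real.exp (-t / τ) /
        (1 + k * τ * (d - xstar) * (1 - Real.exp (-t / τ))))
    (d d' : ℝ)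
    (hd : d - xstar ≥ -(1 / (k * τ)) + η) (hd' : d' - xstar ≥ -(1 / (k * τ)) + η) :
    ∀ t : ℝ, 0 ≤ t →
      |x t d - x t d'| ≤ (1 / (k * τ * η)) ^ 2 * |d - d'| := by
  intro t ht
  have hsq : 0 < Real.sqrt (a ^ 2 + k * q) := Real.sqrt_pos.mpr h
  have hτ0 : 0 < τ := by rw [hτ]; positivity
  have hkτ : 0 < k * τ := mul_pos hk hτ0
  set c : ℝ := k * τ * η with hc
  have hc0 : 0 < c := mul_pos hkτ hη
  have hc1 : c < 1 := by
    have := (lt_div_iff₀ hkτ).mp hη'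
    nlinarith
  set e : ℝ := Real.exp (-t / τ) with he
  have he0 : 0 < e := Real.exp_pos _
  have he1 : e ≤ 1 := by
    rw [he, Real.exp_le_one_iff]
    apply div_nonpos_of_nonpos_of_nonneg <;> linarith
  have hinv : k * τ * (1 / (k * τ)) = 1 := mul_one_div_cancel hkτ.ne'
  have hb : c - 1 ≤ k * τ * (d - xstar) := by
    have h2 := mul_le_mul_of_nonneg_left hd hkτ.le
    nlinarith
  have hb' : c - 1 ≤ k * τ * (d' - xstar) := by
    have h2 := mul_le_mul_of_nonneg_left hd' hkτ.le
    nlinarith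
  set D1 : ℝ := 1 + k * τ * (d - xstar) * (1 - e) with hD1def
  set D2 : ℝ := 1 + k * τ * (d' - xstar) * (1 - e) with hD2def
  have hD1 : c ≤ D1 := by
    have h3 : (c - 1) * (1 - e) ≤ k * τ * (d - xstar) * (1 - e) :=
      mul_le_mul_of_nonneg_right hb (by linarith)
    nlinarith [mul_nonneg (le_of_lt he0) (show (0:ℝ) ≤ 1 - c by linarith)]
  have hD2 : c ≤ D2 := by
    have h3 : (c - 1) * (1 - e) ≤ k * τ * (d' - xstar) * (1 - e) :=
      mul_le_mul_of_nonneg_right hb' (by linarith)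
    nlinarith [mul_nonneg (le_of_lt he0) (show (0:ℝ) ≤ 1 - c by linarith)]
  have hD10 : 0 < D1 := lt_of_lt_of_le hc0 hD1
  have hD20 : 0 < D2 := lt_of_lt_of_le hc0 hD2
  have key : x t d - x t d' = e * (d - d') / (D1 * D2) := by
    rw [hx, hx]
    rw [← he, ← hD1def, ← hD2def]
    field_simp
    rw [hD1def, hD2def]
    ring
  rw [key, abs_div, abs_mul, abs_of_pos he0, abs_of_pos (mul_pos hD10 hD20)]
  have h4 : e * |d - d'| / (D1 * D2) ≤ |d - d'| / (c * c) := by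
    have hnum : e * |d - d'| ≤ |d - d'| := by
      calc e * |d - d'| ≤ 1 * |d - d'| := mul_le_mul_of_nonneg_right he1 (abs_nonneg _)
        _ = |d - d'| := one_mul _
    exact div_le_div₀ (abs_nonneg _) hnum (mul_pos hc0 hc0)
      (mul_le_mul hD1 hD2 hc0.le hD10.le)
  calc e * |d - d'| / (D1 * D2) ≤ |d - d'| / (c * c) := h4
    _ = (1 / c) ^ 2 * |d - d'| := by rw [one_div, inv_pow, ← div_eq_inv_mul, sq]
end

section
/- Let α = 1/(2τ) − |a| and β = 1/(2τ) + |a| where |a| ≤ 1/(2τ). Define φ(Δt) = 1 + (τ/Δt)·log((1 − αΔt)/(1 + βΔt)). Then for 0 < Δt ≤ τ/2, |φ(Δt) − τ[((β² − α²)/2)Δt − (1/3)(α³ + β³)Δt²]| ≤ (1/2)(α⁴ + β⁴)τΔt³. -/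
lemma log_taylor3 (x : ℝ) (hx : |x| ≤ 1/2) :
    |Real.log (1 - x) + (x + x^2/2 + x^3/3)| ≤ |x|^4 / 2 := by
  have hx1 : |x| < 1 := lt_of_le_of_lt hx (by norm_num)
  have hs := Real.hasSum_pow_div_log_of_abs_lt_one hx1
  set f : ℕ → ℝ := fun n => x ^ (n + 1) / (n + 1) with hf
  have hsum3 : ∑ i ∈ Finset.range 3, f i = x + x^2/2 + x^3/3 := by
    simp [hf, Finset.sum_range_succ]
    ring
  have hshift : HasSum (fun n => f (n + 3)) (-Real.log (1 - x) - (x + x^2/2 + x^3/3)) := by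
    rw [hasSum_nat_add_iff 3, hsum3]
    convert hs using 1
    · rfl
    ring
  have hbound : ∀ n : ℕ, |f (n + 3)| ≤ |x|^4/4 * (1/2)^n := by
    intro n
    have h1 : |f (n + 3)| = |x| ^ (n + 4) / (n + 4) := by
      simp only [hf, abs_div, abs_pow]
      rw [abs_of_nonneg (show (0:ℝ) ≤ ((n+3:ℕ):ℝ)+1 by positivity)]
      push_cast
      ring_nf
    rw [h1]
    have h2 : |x| ^ (n + 4) / (n + 4 : ℝ) ≤ |x| ^ (n + 4) / 4 := by
      apply div_le_div_of_nonneg_left (by positivity) (by norm_num)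
      · push_cast; linarith [Nat.cast_nonneg (α := ℝ) n]
    refine h2.trans ?_
    have : |x| ^ (n+4) = |x|^n * |x|^4 := by ring
    rw [this]
    have h3 : |x|^n ≤ (1/2:ℝ)^n := pow_le_pow_left₀ (abs_nonneg x) hx n
    have : |x|^n * |x|^4 ≤ (1/2)^n * |x|^4 := by
      apply mul_le_mul_of_nonneg_right h3 (by positivity)
    linarith
  have hgeom : HasSum (fun n : ℕ => |x|^4/4 * (1/2)^n) (|x|^4/2) := by
    have := hasSum_geometric_of_lt_one (by norm_num : (0:ℝ) ≤ 1/2) (by norm_num)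
    have h := this.mul_left (|x|^4/4)
    convert h using 1
    norm_num
    · rfl
    ring
  have hsabs2 : Summable (fun n => ‖f (n+3)‖) := by
    simpa [Real.norm_eq_abs] using (Summable.of_nonneg_of_le (fun n => abs_nonneg _) hbound hgeom.summable)
  have hsabs : Summable fun n => |f (n+3)| :=
    Summable.of_nonneg_of_le (fun n => abs_nonneg _) hbound hgeom.summable
  have habs : |(-Real.log (1 - x) - (x + x^2/2 + x^3/3))| ≤ |x|^4/2 := by
    calc |(-Real.log (1 - x) - (x + x^2/2 + x^3/3))|
        = |∑' n, f (n+3)| := by rw [hshift.tsum_eq]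
      _ ≤ ∑' n, |f (n+3)| := by
          have := norm_tsum_le_tsum_norm hsabs2
          simpa [Real.norm_eq_abs] using this
      _ ≤ ∑' n : ℕ, |x|^4/4 * (1/2)^n := Summable.tsum_le_tsum hbound hsabs hgeom.summable
      _ = |x|^4/2 := hgeom.tsum_eq
  calc |Real.log (1 - x) + (x + x^2/2 + x^3/3)|
      = |(-Real.log (1 - x) - (x + x^2/2 + x^3/3))| := by rw [abs_sub_comm]; ring_nf
    _ ≤ |x|^4/2 := habs

theorem phi_expansion (τ a : ℝ) (hτ : 0 < τ) (ha : |a| ≤ 1 / (2 * τ))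
    (α β : ℝ) (hα : α = 1 / (2 * τ) - |a|) (hβ : β = 1 / (2 * τ) + |a|)
    (φ : ℝ → ℝ)
    (hφ : ∀ Δt, φ Δt = 1 + τ / Δt * Real.log ((1 - α * Δt) / (1 + β * Δt)))
    (Δt : ℝ) (h1 : 0 < Δt) (h2 : Δt ≤ τ / 2) :
    |φ Δt - τ * ((β ^ 2 - α ^ 2) / 2 * Δt - 1 / 3 * (α ^ 3 + β ^ 3) * Δt ^ 2)| ≤
      1 / 2 * (α ^ 4 + β ^ 4) * τ * Δt ^ 3 := by
  have ha0 : 0 ≤ |a| := abs_nonneg a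
  have hα0 : 0 ≤ α := by rw [hα]; linarith
  have hβ0 : 0 ≤ β := by rw [hβ]; positivity
  have hαle : α ≤ 1 / (2 * τ) := by rw [hα]; linarith
  have hβle : β ≤ 1 / τ := by
    have h : (1:ℝ)/(2*τ) + 1/(2*τ) = 1/τ := by field_simp; norm_num
    rw [hβ]; linarith
  set x := α * Δt with hxdef
  set y := β * Δt with hydef
  have hx0 : 0 ≤ x := mul_nonneg hα0 h1.le
  have hy0 : 0 ≤ y := mul_nonneg hβ0 h1.le
  have hxle : x ≤ 1/2 := by
    have : x ≤ 1 / (2*τ) * (τ/2) := mul_le_mul hαle h2 h1.le (by positivity)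
    have h4 : 1 / (2*τ) * (τ/2) = 1/4 := by field_simp; ring
    rw [h4] at this; linarith
  have hyle : y ≤ 1/2 := by
    have : y ≤ 1 / τ * (τ/2) := mul_le_mul hβle h2 h1.le (by positivity)
    have h4 : 1 / τ * (τ/2) = 1/2 := by field_simp
    rw [h4] at this; linarith
  have hx12 : |x| ≤ 1/2 := by rw [abs_of_nonneg hx0]; exact hxle
  have hy12 : |(-y)| ≤ 1/2 := by rw [abs_neg, abs_of_nonneg hy0]; exact hyle
  have hE1 := log_taylor3 x hx12
  have hE2 := log_taylor3 (-y) hy12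
  rw [abs_of_nonneg hx0] at hE1
  rw [abs_neg, abs_of_nonneg hy0] at hE2
  set E1 := Real.log (1 - x) + (x + x^2/2 + x^3/3) with hE1def
  set E2 := Real.log (1 - (-y)) + ((-y) + (-y)^2/2 + (-y)^3/3) with hE2def
  have h1mx : (0:ℝ) < 1 - x := by linarith
  have h1py : (0:ℝ) < 1 + y := by linarith
  have hαβ : τ * (α + β) = 1 := by rw [hα, hβ]; field_simp; ring
  have hlog : Real.log ((1 - x) / (1 + y)) = Real.log (1 - x) - Real.log (1 + y) :=
    Real.log_div h1mx.ne' h1py.ne'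
  have hlog1 : Real.log (1 - x) = E1 - (x + x^2/2 + x^3/3) := by rw [hE1def]; ring
  have hlog2 : Real.log (1 + y) = E2 - ((-y) + (-y)^2/2 + (-y)^3/3) := by
    rw [hE2def]; ring_nf
  have key : φ Δt - τ * ((β ^ 2 - α ^ 2) / 2 * Δt - 1 / 3 * (α ^ 3 + β ^ 3) * Δt ^ 2)
      = τ / Δt * (E1 - E2) := by
    rw [hφ, hlog, hlog1, hlog2, hxdef, hydef]
    field_simp
    linear_combination (Δt - τ*α*Δt - τ*β*Δt + Δt*(τ*α+τ*β-1) - 36*Δt^2 - 6*Δt + 36*Δt^2) * hαβ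
  rw [key]
  have hbnd : |τ / Δt * (E1 - E2)| ≤ τ / Δt * (x^4/2 + y^4/2) := by
    rw [abs_mul, abs_of_nonneg (by positivity : (0:ℝ) ≤ τ / Δt)]
    have : |E1 - E2| ≤ x^4/2 + y^4/2 := (abs_sub _ _).trans (by linarith)
    exact mul_le_mul_of_nonneg_left this (by positivity)
  have heq : τ / Δt * (x^4/2 + y^4/2) = 1 / 2 * (α ^ 4 + β ^ 4) * τ * Δt ^ 3 := by
    rw [hxdef, hydef]; field_simp
  linarith [hbnd, heq ▸ hbnd]
end

section
/- Suppose a ≠ 0 and 0 < Δt ≤ min(τ/2, |a|τ²), where |a| ≤ 1/(2τ). With α = 1/(2τ) − |a|, β = 1/(2τ) + |a|, and φ(Δt) = 1 + (τ/Δt)·log((1 − αΔt)/(1 + βΔt)), one has |φ(Δt) − |a|Δt| ≤ (7/12)|a|Δt; in particular 0 < φ(Δt) ≤ (19/12)|a|Δt. -/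
lemma aux_log_add_lb (v : ℝ) (hv : 0 ≤ v) : v - v^2/2 ≤ Real.log (1+v) := by
  have hd : ∀ t : ℝ, 0 < t → HasDerivAt (fun s : ℝ => Real.log (1+s) - (s - s^2/2))
      (1/(1+t) - (1 - t)) t := by
    intro t ht
    have h0 : (1:ℝ) + t ≠ 0 := by linarith
    have h1 : HasDerivAt (fun s : ℝ => 1 + s) 1 t := by
      simpa using (hasDerivAt_id t).const_add 1
    have h3 : HasDerivAt (fun s : ℝ => s - s^2/2) (1 - t) t := by
      have := (hasDerivAt_id t).sub ((hasDerivAt_pow 2 t).div_const 2)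
      refine this.congr_deriv ?_
      push_cast; ring
    simpa [Pi.sub_def] using (h1.log h0).sub h3
  have key : MonotoneOn (fun t : ℝ => Real.log (1+t) - (t - t^2/2)) (Set.Ici 0) := by
    apply monotoneOn_of_deriv_nonneg (convex_Ici 0)
    · apply ContinuousOn.sub
      · apply ContinuousOn.log (by fun_prop)
        intro t ht
        simp only [Set.mem_Ici] at ht
        intro h; linarith
      · fun_prop
    · intro t ht
      rw [interior_Ici] at ht
      exact (hd t ht).differentiableAt.differentiableWithinAt
    · intro t ht
      rw [interior_Ici, Set.mem_Ioi] at ht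
      rw [(hd t ht).deriv]
      have h0 : (0:ℝ) < 1 + t := by linarith
      have : (1 - t) ≤ 1/(1+t) := by
        rw [le_div_iff₀ h0]; nlinarith
      linarith
  have h := key (Set.self_mem_Ici) (Set.mem_Ici.2 hv) hv
  simp only [Real.log_one, add_zero] at h
  norm_num at h
  linarith

lemma aux_log_add_ub (v : ℝ) (hv : 0 ≤ v) : Real.log (1+v) ≤ v - v^2/2 + v^3/3 := by
  have hd : ∀ t : ℝ, 0 < t → HasDerivAt (fun s : ℝ => (s - s^2/2 + s^3/3) - Real.log (1+s))
      ((1 - t + t^2) - 1/(1+t)) t := by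
    intro t ht
    have h0 : (1:ℝ) + t ≠ 0 := by linarith
    have h1 : HasDerivAt (fun s : ℝ => 1 + s) 1 t := by
      simpa using (hasDerivAt_id t).const_add 1
    have h3 : HasDerivAt (fun s : ℝ => s - s^2/2 + s^3/3) (1 - t + t^2) t := by
      have := ((hasDerivAt_id t).sub ((hasDerivAt_pow 2 t).div_const 2)).add
        ((hasDerivAt_pow 3 t).div_const 3)
      refine this.congr_deriv ?_
      push_cast; ring
    simpa [Pi.sub_def] using h3.sub (h1.log h0)
  have key : MonotoneOn (fun t : ℝ => (t - t^2/2 + t^3/3) - Real.log (1+t)) (Set.Ici 0) := by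
    apply monotoneOn_of_deriv_nonneg (convex_Ici 0)
    · apply ContinuousOn.sub
      · fun_prop
      · apply ContinuousOn.log (by fun_prop)
        intro t ht
        simp only [Set.mem_Ici] at ht
        intro h; linarith
    · intro t ht
      rw [interior_Ici] at ht
      exact (hd t ht).differentiableAt.differentiableWithinAt
    · intro t ht
      rw [interior_Ici, Set.mem_Ioi] at ht
      rw [(hd t ht).deriv]
      have h0 : (0:ℝ) < 1 + t := by linarith
      have : 1/(1+t) ≤ (1 - t + t^2) := by
        rw [div_le_iff₀ h0]; nlinarith
      linarith
  have h := key (Set.self_mem_Ici) (Set.mem_Ici.2 hv) hv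
  simp only [Real.log_one, add_zero] at h
  norm_num at h
  linarith

lemma aux_log_sub_ub (u : ℝ) (hu : 0 ≤ u) (hu' : u ≤ 3/4) :
    Real.log (1-u) ≤ -u - u^2/2 := by
  have hd : ∀ t : ℝ, t ∈ Set.Ioo (0:ℝ) (3/4) →
      HasDerivAt (fun s : ℝ => (-s - s^2/2) - Real.log (1-s)) ((-1 - t) - (-1/(1-t))) t := by
    intro t ht
    obtain ⟨ht0, ht1⟩ := ht
    have h0 : (1:ℝ) - t ≠ 0 := by intro h; linarith
    have h1 : HasDerivAt (fun s : ℝ => 1 - s) (-1) t := by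
      simpa using ((hasDerivAt_id t).const_sub 1)
    have h3 : HasDerivAt (fun s : ℝ => -s - s^2/2) (-1 - t) t := by
      have := ((hasDerivAt_id t).neg).sub ((hasDerivAt_pow 2 t).div_const 2)
      refine this.congr_deriv ?_
      push_cast; ring
    simpa [Pi.sub_def] using h3.sub (h1.log h0)
  have key : MonotoneOn (fun t : ℝ => (-t - t^2/2) - Real.log (1-t)) (Set.Icc 0 (3/4)) := by
    apply monotoneOn_of_deriv_nonneg (convex_Icc 0 (3/4))
    · apply ContinuousOn.sub
      · fun_prop
      · apply ContinuousOn.log (by fun_prop)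
        intro t ht
        simp only [Set.mem_Icc] at ht
        intro h; linarith [ht.2]
    · intro t ht
      rw [interior_Icc] at ht
      exact (hd t ht).differentiableAt.differentiableWithinAt
    · intro t ht
      rw [interior_Icc] at ht
      rw [(hd t ht).deriv]
      obtain ⟨ht0, ht1⟩ := ht
      have h0 : (0:ℝ) < 1 - t := by linarith
      have : (1 + t) ≤ 1/(1-t) := by
        rw [le_div_iff₀ h0]; nlinarith
      have e : -1/(1-t) = -(1/(1-t)) := by ring
      linarith
  have h := key (Set.left_mem_Icc.2 (by norm_num)) (Set.mem_Icc.2 ⟨hu, hu'⟩) hu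
  simp only [Real.log_one, sub_zero] at h
  norm_num at h
  linarith

lemma aux_log_sub_lb (u : ℝ) (hu : 0 ≤ u) (hu' : u ≤ 3/4) :
    -u - u^2/2 - 4/3*u^3 ≤ Real.log (1-u) := by
  have hd : ∀ t : ℝ, t ∈ Set.Ioo (0:ℝ) (3/4) →
      HasDerivAt (fun s : ℝ => Real.log (1-s) - (-s - s^2/2 - 4/3*s^3))
        ((-1/(1-t)) - (-1 - t - 4*t^2)) t := by
    intro t ht
    obtain ⟨ht0, ht1⟩ := ht
    have h0 : (1:ℝ) - t ≠ 0 := by intro h; linarith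
    have h1 : HasDerivAt (fun s : ℝ => 1 - s) (-1) t := by
      simpa using ((hasDerivAt_id t).const_sub 1)
    have h3 : HasDerivAt (fun s : ℝ => -s - s^2/2 - 4/3*s^3) (-1 - t - 4*t^2) t := by
      have := (((hasDerivAt_id t).neg).sub ((hasDerivAt_pow 2 t).div_const 2)).sub
        (((hasDerivAt_pow 3 t)).const_mul (4/3 : ℝ))
      refine this.congr_deriv ?_
      push_cast; ring
    simpa [Pi.sub_def] using (h1.log h0).sub h3
  have key : MonotoneOn (fun t : ℝ => Real.log (1-t) - (-t - t^2/2 - 4/3*t^3))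
      (Set.Icc 0 (3/4)) := by
    apply monotoneOn_of_deriv_nonneg (convex_Icc 0 (3/4))
    · apply ContinuousOn.sub
      · apply ContinuousOn.log (by fun_prop)
        intro t ht
        simp only [Set.mem_Icc] at ht
        intro h; linarith [ht.2]
      · fun_prop
    · intro t ht
      rw [interior_Icc] at ht
      exact (hd t ht).differentiableAt.differentiableWithinAt
    · intro t ht
      rw [interior_Icc] at ht
      rw [(hd t ht).deriv]
      obtain ⟨ht0, ht1⟩ := ht
      have h0 : (0:ℝ) < 1 - t := by linarith
      have : 1/(1-t) ≤ (1 + t + 4*t^2) := by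
        rw [div_le_iff₀ h0]; nlinarith
      have e : -1/(1-t) = -(1/(1-t)) := by ring
      linarith
  have h := key (Set.left_mem_Icc.2 (by norm_num)) (Set.mem_Icc.2 ⟨hu, hu'⟩) hu
  simp only [Real.log_one, sub_zero] at h
  norm_num at h
  linarith

set_option maxHeartbeats 2000000 in
theorem phi_estimate_a_ne_zero (τ a : ℝ) (hτ : 0 < τ) (ha : a ≠ 0)
    (ha' : |a| ≤ 1 / (2 * τ))
    (α β : ℝ) (hα : α = 1 / (2 * τ) - |a|) (hβ : β = 1 / (2 * τ) + |a|)
    (φ : ℝ → ℝ)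
    (hφ : ∀ Δt, φ Δt = 1 + τ / Δt * Real.log ((1 - α * Δt) / (1 + β * Δt)))
    (Δt : ℝ) (h1 : 0 < Δt) (h2 : Δt ≤ min (τ / 2) (|a| * τ ^ 2)) :
    |φ Δt - |a| * Δt| ≤ 7 / 12 * |a| * Δt ∧
    0 < φ Δt ∧ φ Δt ≤ 19 / 12 * |a| * Δt := by
  have hm : 0 < |a| := abs_pos.2 ha
  have hx1 : Δt ≤ τ/2 := le_trans h2 (min_le_left _ _)
  have hx2 : Δt ≤ |a| * τ^2 := le_trans h2 (min_le_right _ _)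
  have hτ' : τ ≠ 0 := ne_of_gt hτ
  have hΔ' : Δt ≠ 0 := ne_of_gt h1
  have hc : 0 < 1/(2*τ) := by positivity
  have hα0 : 0 ≤ α := by rw [hα]; linarith
  have hβ0 : 0 < β := by rw [hβ]; linarith
  have hct : (1:ℝ)/(2*τ) + 1/(2*τ) = 1/τ := by rw [← add_div, eq_div_iff hτ']; ring_nf; field_simp
  have hβτ : β ≤ 1/τ := by rw [hβ]; linarith
  have hαc : α ≤ 1/(2*τ) := by rw [hα]; linarith [abs_nonneg a]
  have hq1 : (1:ℝ)/(2*τ) * (τ/2) = 1/4 := by field_simp; ring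
  have hq2 : (1:ℝ)/τ * (τ/2) = 1/2 := by field_simp
  have hu : α*Δt ≤ 1/4 := by
    calc α*Δt ≤ (1/(2*τ))*(τ/2) := mul_le_mul hαc hx1 h1.le hc.le
    _ = 1/4 := hq1
  have hu0 : 0 ≤ α*Δt := mul_nonneg hα0 h1.le
  have hv : β*Δt ≤ 1/2 := by
    calc β*Δt ≤ (1/τ)*(τ/2) := mul_le_mul hβτ hx1 h1.le (by positivity)
    _ = 1/2 := hq2
  have hv0 : 0 ≤ β*Δt := mul_nonneg hβ0.le h1.le
  have l1 := aux_log_sub_ub (α*Δt) hu0 (by linarith)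
  have l2 := aux_log_sub_lb (α*Δt) hu0 (by linarith)
  have l3 := aux_log_add_lb (β*Δt) hv0
  have l4 := aux_log_add_ub (β*Δt) hv0
  have hne1 : (1:ℝ) - α*Δt ≠ 0 := by intro h; linarith
  have hne2 : (1:ℝ) + β*Δt ≠ 0 := by intro h; linarith
  have hφx : φ Δt = 1 + τ/Δt * (Real.log (1 - α*Δt) - Real.log (1 + β*Δt)) := by
    rw [hφ, Real.log_div hne1 hne2]
  have hτx : 0 ≤ τ/Δt := by positivity
  -- upper bound : φ ≤ |a| Δt
  have hub : φ Δt ≤ |a| * Δt := by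
    have hS : Real.log (1-α*Δt) - Real.log (1+β*Δt)
        ≤ (-(α*Δt) - (α*Δt)^2/2) - ((β*Δt) - (β*Δt)^2/2) := by linarith
    have hmul := mul_le_mul_of_nonneg_left hS hτx
    have hid : 1 + τ/Δt * ((-(α*Δt) - (α*Δt)^2/2) - ((β*Δt) - (β*Δt)^2/2)) = |a| * Δt := by
      rw [hα, hβ]; field_simp; ring
    rw [hφx]; linarith
  -- error term bounds
  have hA : τ*α ≤ 1/2 := by
    have h' : τ*(1/(2*τ)) = 1/2 := by field_simp
    have := mul_nonneg hτ.le (abs_nonneg a)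
    rw [hα]; nlinarith
  have hA0 : 0 ≤ τ*α := mul_nonneg hτ.le hα0
  have hB : τ*β ≤ 1 := by
    have h' : τ*(1/(2*τ)) = 1/2 := by field_simp
    have h'' : τ*|a| ≤ τ*(1/(2*τ)) := mul_le_mul_of_nonneg_left ha' hτ.le
    rw [hβ]; nlinarith
  have hB0 : 0 ≤ τ*β := mul_nonneg hτ.le hβ0.le
  have h8 : (τ*α)^3 ≤ 1/8 := by
    calc (τ*α)^3 ≤ (1/2:ℝ)^3 := pow_le_pow_left₀ hA0 hA 3
    _ = 1/8 := by norm_num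
  have h8' : (τ*β)^3 ≤ 1 := by
    calc (τ*β)^3 ≤ (1:ℝ)^3 := pow_le_pow_left₀ hB0 hB 3
    _ = 1 := by norm_num
  have hxx : Δt^2 ≤ |a| * τ^2*Δt := by
    rw [sq]
    calc Δt * Δt ≤ (|a| * τ^2) * Δt := mul_le_mul_of_nonneg_right hx2 h1.le
    _ = |a| * τ^2*Δt := by ring
  have hτ2 : 0 < τ^2 := by positivity
  have step1 : (τ*α)^3 * Δt^2 ≤ 1/8*(|a| * τ^2*Δt) :=
    mul_le_mul h8 hxx (by positivity) (by norm_num)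
  have step2 : (τ*β)^3 * Δt^2 ≤ 1*(|a| * τ^2*Δt) :=
    mul_le_mul h8' hxx (by positivity) (by norm_num)
  have e1 : 4/3*τ*α^3*Δt^2 ≤ |a| * Δt/6 := by
    have e1' : τ^2*(4/3*τ*α^3*Δt^2) ≤ τ^2*(|a| * Δt/6) := by linarith [step1]
    exact (mul_le_mul_iff_right₀ hτ2).mp e1'
  have e2 : 1/3*τ*β^3*Δt^2 ≤ |a| * Δt/3 := by
    have e2' : τ^2*(1/3*τ*β^3*Δt^2) ≤ τ^2*(|a| * Δt/3) := by linarith [step2]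
    exact (mul_le_mul_iff_right₀ hτ2).mp e2'
  -- lower bound : |a| Δt / 2 ≤ φ
  have hlb : |a| * Δt/2 ≤ φ Δt := by
    have hS : (-(α*Δt) - (α*Δt)^2/2 - 4/3*(α*Δt)^3) - ((β*Δt) - (β*Δt)^2/2 + (β*Δt)^3/3)
        ≤ Real.log (1-α*Δt) - Real.log (1+β*Δt) := by linarith
    have hmul := mul_le_mul_of_nonneg_left hS hτx
    have hid : 1 + τ/Δt * ((-(α*Δt) - (α*Δt)^2/2 - 4/3*(α*Δt)^3)
        - ((β*Δt) - (β*Δt)^2/2 + (β*Δt)^3/3))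
        = |a| * Δt - 4/3*τ*α^3*Δt^2 - 1/3*τ*β^3*Δt^2 := by
      rw [hα, hβ]; field_simp; ring
    rw [hφx]; linarith
  have hmx : 0 < |a| * Δt := mul_pos hm h1
  refine ⟨?_, ?_, ?_⟩
  · rw [abs_le]; constructor <;> [linarith; linarith]
  · linarith
  · linarith
end

section
/- Suppose a = 0, so α = β = 1/(2τ). For 0 < Δt ≤ τ/2, the quantity φ(Δt) = 1 + (τ/Δt)·log((1 − Δt/(2τ))/(1 + Δt/(2τ))) satisfies |φ(Δt) + Δt²/(12τ²)| ≤ Δt²/(32τ²); in particular φ(Δt) < 0. -/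
set_option maxHeartbeats 800000


theorem phi_estimate_a_eq_zero (τ : ℝ) (hτ : 0 < τ)
    (φ : ℝ → ℝ)
    (hφ : ∀ Δt, φ Δt = 1 + τ / Δt * Real.log ((1 - Δt / (2 * τ)) / (1 + Δt / (2 * τ))))
    (Δt : ℝ) (h1 : 0 < Δt) (h2 : Δt ≤ τ / 2) :
    |φ Δt + Δt ^ 2 / (12 * τ ^ 2)| ≤ Δt ^ 2 / (32 * τ ^ 2) ∧ φ Δt < 0 := by
  set x : ℝ := Δt / (2 * τ) with hxdef
  have hx0 : 0 < x := by positivity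
  have hx4 : x ≤ 1 / 4 := by
    rw [hxdef, div_le_iff₀ (by positivity)]
    nlinarith
  have hax : |x| < 1 := by rw [abs_of_pos hx0]; linarith
  have hax' : |(-x)| < 1 := by rwa [abs_neg]
  have A := Real.abs_log_sub_add_sum_range_le hax 4
  have B := Real.abs_log_sub_add_sum_range_le hax' 4
  have hsum : ∀ y : ℝ, (∑ i ∈ Finset.range 4, y ^ (i + 1) / (i + 1))
      = y + y ^ 2 / 2 + y ^ 3 / 3 + y ^ 4 / 4 := by
    intro y
    simp [Finset.sum_range_succ]
    ring
  rw [hsum, abs_of_pos hx0] at A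
  rw [hsum, abs_neg, abs_of_pos hx0, sub_neg_eq_add] at B
  set L : ℝ := Real.log (1 - x) - Real.log (1 + x) with hLdef
  -- |L + 2x + 2x^3/3| ≤ 2 x^5/(1-x)
  have hA := abs_le.mp A
  have hB := abs_le.mp B
  have key : |L + 2 * x + 2 * x ^ 3 / 3| ≤ x ^ 3 / 6 := by
    have h1x : (0:ℝ) < 1 - x := by linarith
    have hb : x ^ 5 / (1 - x) ≤ x ^ 3 / 12 := by
      rw [div_le_div_iff₀ h1x (by norm_num)]
      have h12 : 0 ≤ 1 - x - 12 * x ^ 2 := by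
        nlinarith [mul_le_mul_of_nonneg_left hx4 hx0.le]
      nlinarith [mul_nonneg (pow_pos hx0 3).le h12]
    rw [abs_le]
    constructor <;> nlinarith [hA.1, hA.2, hB.1, hB.2]
  -- rewrite φ
  have hΔ : Δt = 2 * τ * x := by rw [hxdef]; field_simp
  have hτΔ : τ / Δt = 1 / (2 * x) := by
    rw [hΔ]; field_simp
  have hlog : Real.log ((1 - x) / (1 + x)) = L := by
    rw [hLdef, Real.log_div (by linarith) (by linarith)]
  have hφx : φ Δt = 1 + L / (2 * x) := by
    rw [hφ, hτΔ, hlog]; ring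
  have hd1 : Δt ^ 2 / (12 * τ ^ 2) = x ^ 2 / 3 := by rw [hΔ]; field_simp; ring
  have hd2 : Δt ^ 2 / (32 * τ ^ 2) = x ^ 2 / 8 := by rw [hΔ]; field_simp; ring
  have hmain : φ Δt + x ^ 2 / 3 = (L + 2 * x + 2 * x ^ 3 / 3) / (2 * x) := by
    rw [hφx]; field_simp; ring
  have hk := abs_le.mp key
  have hbound : |φ Δt + x ^ 2 / 3| ≤ x ^ 2 / 8 := by
    rw [hmain, abs_le]
    constructor
    · rw [le_div_iff₀ (by positivity)]; nlinarith [hk.1]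
    · rw [div_le_iff₀ (by positivity)]; nlinarith [hk.2]
  constructor
  · rw [hd1, hd2]; exact hbound
  · have := (abs_le.mp hbound).2
    nlinarith [pow_pos hx0 2]
end

section
/- Let S be a real n×n matrix such that S + Sᵗ is positive definite. Then the linear map φ_S on the space of real symmetric n×n matrices defined by φ_S(X) = SᵗX + XS is bijective. -/
open Matrix

section aux

variable {n : ℕ}

lemma diag_eq_dot (M X : Matrix (Fin n) (Fin n) ℝ) (i : Fin n) :
    (Xᵀ * M * X) i i = (fun j => X j i) ⬝ᵥ (M *ᵥ fun j => X j i) := by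
  simp only [Matrix.mul_apply, Matrix.mulVec, dotProduct, Matrix.transpose_apply,
    Finset.sum_mul, Finset.mul_sum]
  rw [Finset.sum_comm]
  apply Finset.sum_congr rfl
  intro j _
  apply Finset.sum_congr rfl
  intro k _
  ring

lemma key (S : Matrix (Fin n) (Fin n) ℝ) (hS : (S + Sᵀ).PosDef)
    (X : Matrix (Fin n) (Fin n) ℝ) (hX : X.IsSymm) (h : Sᵀ * X + X * S = 0) : X = 0 := by
  set M := S + Sᵀ with hM
  have hSX : Sᵀ * X = -(X * S) := eq_neg_of_add_eq_zero_left h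
  have htr : (Xᵀ * M * X).trace = 0 := by
    have h1 : Xᵀ * M * X = X * (Sᵀ * X) + X * S * X := by
      rw [hX, hM]; noncomm_ring
    rw [h1, hSX, Matrix.trace_add]
    have : (X * -(X * S)).trace = -((X * X * S).trace) := by
      rw [mul_neg, Matrix.trace_neg, mul_assoc]
    rw [this]
    have h2 : (X * S * X).trace = (X * X * S).trace := by
      rw [Matrix.trace_mul_cycle X S X]
    rw [h2]; ring
  have hdiag : ∀ i, (Xᵀ * M * X) i i = 0 := by
    have hnn : ∀ i ∈ Finset.univ, (0:ℝ) ≤ (Xᵀ * M * X) i i := by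
      intro i _
      rw [diag_eq_dot]
      have := hS.posSemidef.dotProduct_mulVec_nonneg (fun j => X j i)
      simpa using this
    intro i
    exact (Finset.sum_eq_zero_iff_of_nonneg hnn).mp htr i (Finset.mem_univ i)
  ext j i
  by_contra hne
  have hv : (fun j => X j i) ≠ 0 := by
    intro hv0
    exact hne (by simpa using congrFun hv0 j)
  have := hS.dotProduct_mulVec_pos (x := fun j => X j i) hv
  rw [show star (fun j => X j i) = (fun j => X j i) from rfl, ← diag_eq_dot, hdiag i] at this
  exact lt_irrefl _ this

def symmSub (n : ℕ) : Submodule ℝ (Matrix (Fin n) (Fin n) ℝ) where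
  carrier := {X | X.IsSymm}
  add_mem' := by
    intro a b ha hb
    simp only [Set.mem_setOf_eq, Matrix.IsSymm] at *
    rw [Matrix.transpose_add, ha, hb]
  zero_mem' := Matrix.isSymm_zero
  smul_mem' := by
    intro c X h
    simp only [Set.mem_setOf_eq, Matrix.IsSymm] at *
    rw [Matrix.transpose_smul, h]

def lyapLM (S : Matrix (Fin n) (Fin n) ℝ) : symmSub n →ₗ[ℝ] symmSub n where
  toFun X := ⟨Sᵀ * X + X * S, by
    have hX : (X : Matrix (Fin n) (Fin n) ℝ).IsSymm := X.2
    show (Sᵀ * X + X * S).IsSymm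
    unfold Matrix.IsSymm at *
    rw [Matrix.transpose_add, Matrix.transpose_mul, Matrix.transpose_mul,
      Matrix.transpose_transpose, hX, add_comm]⟩
  map_add' X Y := by
    ext1
    simp only [Submodule.coe_add]
    push_cast
    noncomm_ring
  map_smul' c X := by
    ext1
    simp only [SetLike.val_smul, RingHom.id_apply]
    push_cast
    rw [Matrix.mul_smul, Matrix.smul_mul, smul_add]

end aux

theorem lyapunov_map_bijective (n : ℕ) (hn : 1 ≤ n)
    (S : Matrix (Fin n) (Fin n) ℝ) (hS : (S + Sᵀ).PosDef) :
    ∀ Y : Matrix (Fin n) (Fin n) ℝ, Y.IsSymm →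
      ∃! X : Matrix (Fin n) (Fin n) ℝ, X.IsSymm ∧ Sᵀ * X + X * S = Y := by
  intro Y hY
  have hinj : Function.Injective (lyapLM S) := by
    rw [← LinearMap.ker_eq_bot]
    rw [Submodule.eq_bot_iff]
    intro X hX
    have h0 : Sᵀ * (X : Matrix (Fin n) (Fin n) ℝ) + (X : Matrix (Fin n) (Fin n) ℝ) * S = 0 := by
      have := congrArg Subtype.val (LinearMap.mem_ker.mp hX)
      simpa [lyapLM] using this
    have := key S hS X X.2 h0
    exact Subtype.ext this
  have hsurj : Function.Surjective (lyapLM S) := LinearMap.injective_iff_surjective.mp hinj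
  obtain ⟨X, hXeq⟩ := hsurj ⟨Y, hY⟩
  refine ⟨X, ⟨X.2, by simpa [lyapLM] using congrArg Subtype.val hXeq⟩, ?_⟩
  intro Z ⟨hZs, hZeq⟩
  have : lyapLM S ⟨Z, hZs⟩ = lyapLM S X := by
    rw [hXeq]
    exact Subtype.ext (by simpa [lyapLM] using hZeq)
  exact congrArg Subtype.val (hinj this)
end

section
/- Let S be a real n×n matrix with S + Sᵗ positive definite, and let X be a real symmetric n×n matrix. If SᵗX + XS is positive semidefinite then X is positive semidefinite, and if SᵗX + XS is positive definite then X is positive definite. -/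
open Matrix

theorem lyapunov_preserves_positivity (n : ℕ) (hn : 1 ≤ n)
    (S X : Matrix (Fin n) (Fin n) ℝ) (hS : (S + Sᵀ).PosDef) (hX : X.IsSymm) :
    ((Sᵀ * X + X * S).PosSemidef → X.PosSemidef) ∧
    ((Sᵀ * X + X * S).PosDef → X.PosDef) := by
  have hH : X.IsHermitian := by
    rwa [Matrix.IsHermitian, Matrix.conjTranspose_eq_transpose_of_trivial]
  -- key computation: for any eigenvector v with eigenvalue lam,
  -- v ⬝ (Q v) = lam * (v ⬝ ((S+Sᵀ) v))
  have key : ∀ (v : Fin n → ℝ), X *ᵥ v = (0 : Fin n → ℝ) →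
      v ⬝ᵥ ((Sᵀ * X + X * S) *ᵥ v) = 0 := by
    intro v hv
    rw [Matrix.add_mulVec, dotProduct_add, ← Matrix.mulVec_mulVec, hv, Matrix.mulVec_zero,
      dotProduct_zero, ← Matrix.mulVec_mulVec, Matrix.dotProduct_mulVec,
      ← Matrix.mulVec_transpose, hX.eq, hv, zero_dotProduct, add_zero]
  have psd : (Sᵀ * X + X * S).PosSemidef → X.PosSemidef := by
    intro hQ
    apply hH.posSemidef_iff_eigenvalues_nonneg.mpr
    intro i
    set v : Fin n → ℝ := ⇑(hH.eigenvectorBasis i) with hvdef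
    have hv0 : v ≠ 0 := by
      have := hH.eigenvectorBasis.orthonormal.ne_zero i
      intro h
      apply this
      ext j
      exact congrFun h j
    have hev : X *ᵥ v = hH.eigenvalues i • v := hH.mulVec_eigenvectorBasis i
    have hSpos : 0 < v ⬝ᵥ ((S + Sᵀ) *ᵥ v) := by
      have := hS.dotProduct_mulVec_pos hv0
      simpa using this
    have hcomp : v ⬝ᵥ ((Sᵀ * X + X * S) *ᵥ v)
        = hH.eigenvalues i * (v ⬝ᵥ ((S + Sᵀ) *ᵥ v)) := by
      rw [Matrix.add_mulVec, dotProduct_add, ← Matrix.mulVec_mulVec, hev,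
        ← Matrix.mulVec_mulVec, Matrix.dotProduct_mulVec (v := v) (A := X),
        ← Matrix.mulVec_transpose, hX.eq, hev, Matrix.mulVec_smul, dotProduct_smul,
        smul_dotProduct, Matrix.add_mulVec, dotProduct_add, smul_eq_mul, smul_eq_mul,
        mul_add]
      ring_nf
    have hQv : 0 ≤ v ⬝ᵥ ((Sᵀ * X + X * S) *ᵥ v) := by
      have := hQ.dotProduct_mulVec_nonneg v
      simpa using this
    rw [hcomp] at hQv
    exact (mul_nonneg_iff_of_pos_right hSpos).mp hQv
  refine ⟨psd, fun hQ => ?_⟩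
  have hXpsd : X.PosSemidef := psd hQ.posSemidef
  refine posDef_iff_dotProduct_mulVec.mpr ⟨hH, fun x hx => ?_⟩
  have h0 : 0 ≤ star x ⬝ᵥ X *ᵥ x := hXpsd.dotProduct_mulVec_nonneg x
  rcases lt_or_eq_of_le h0 with h | h
  · exact h
  · exfalso
    have hXx : X *ᵥ x = 0 := (hXpsd.dotProduct_mulVec_zero_iff x).mp h.symm
    have := hQ.dotProduct_mulVec_pos hx
    rw [show star x = x from rfl, key x hXx] at this
    exact lt_irrefl 0 this
end
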